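/- For every ℓ ∈ ℕ and k > 0: the functions r ↦ |j_ℓ(ikr)| and r ↦ |d/dr j_ℓ(ikr)| are nondecreasing on (0, ∞), and the function r ↦ |h_ℓ(ikr)| is strictly decreasing on (0, ∞). -/

import Mathlib

open Complex MeasureTheory Set

/-- The Rayleigh derivative operator `D f = x ↦ f'(x)/x`. -/
noncomputable def raylD (f : ℂ → ℂ) : ℂ → ℂ := fun x => deriv f x / x

/-- Spherical Bessel function `j_ℓ(x) = (-x)^ℓ Dˡ(sin x / x)`. -/
noncomputable def sphJ (l : ℕ) (x : ℂ) : ℂ :=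
  (-x) ^ l * (raylD^[l] (fun y => Complex.sin y / y)) x

/-- Spherical Hankel function of the first kind `h_ℓ(x) = -i (-x)^ℓ Dˡ(e^{ix}/x)`. -/
noncomputable def sphH (l : ℕ) (x : ℂ) : ℂ :=
  -Complex.I * ((-x) ^ l * (raylD^[l] (fun y => Complex.exp (Complex.I * y) / y)) x)

section auxseries
variable {𝕜 : Type*} [RCLike 𝕜]

lemma aux_summable {A : ℝ} {c : ℕ → 𝕜} (h : ∀ n, ‖c n‖ ≤ A / n.factorial) (x : 𝕜) :
    Summable fun n => c n * x ^ (2 * n) := by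
  apply Summable.of_norm_bounded (g := fun n => A * (‖x‖ ^ 2) ^ n / n.factorial)
  · simpa [mul_div_assoc] using (Real.summable_pow_div_factorial (‖x‖ ^ 2)).mul_left A
  · intro n
    rw [norm_mul, norm_pow]
    calc ‖c n‖ * ‖x‖ ^ (2 * n) ≤ (A / n.factorial) * ‖x‖ ^ (2 * n) :=
          mul_le_mul_of_nonneg_right (h n) (by positivity)
      _ = A * (‖x‖ ^ 2) ^ n / n.factorial := by rw [pow_mul]; ring

lemma aux_deriv_bound {A : ℝ} {c : ℕ → 𝕜} (h : ∀ n, ‖c n‖ ≤ A / n.factorial)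
    {R : ℝ} (hR1 : 1 ≤ R) {y : 𝕜} (hy : ‖y‖ ≤ R) (n : ℕ) :
    ‖c n * ((2 * n : ℕ) * y ^ (2 * n - 1))‖ ≤ (A * 2) * ((2 * R ^ 2) ^ n) / n.factorial := by
  have hA : (0:ℝ) ≤ A := le_trans (norm_nonneg (c 0)) (by simpa using h 0)
  have h2n : ((2 * n : ℕ) : ℝ) ≤ 2 * 2 ^ n := by
    have : (n : ℝ) ≤ 2 ^ n := by exact_mod_cast (Nat.lt_two_pow_self (n := n)).le
    push_cast; linarith
  calc ‖c n * ((2 * n : ℕ) * y ^ (2 * n - 1))‖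
      = ‖c n‖ * (((2 * n : ℕ) : ℝ) * ‖y‖ ^ (2 * n - 1)) := by
        rw [norm_mul, norm_mul, norm_pow, RCLike.norm_natCast]
    _ ≤ (A / n.factorial) * ((2 * 2 ^ n) * R ^ (2 * n)) := by
        apply mul_le_mul (h n) _ (by positivity) (div_nonneg hA (Nat.cast_nonneg _))
        apply mul_le_mul h2n _ (by positivity) (by positivity)
        calc ‖y‖ ^ (2 * n - 1) ≤ R ^ (2 * n - 1) :=
              pow_le_pow_left₀ (norm_nonneg y) hy _
          _ ≤ R ^ (2 * n) := pow_le_pow_right₀ hR1 (Nat.sub_le _ _)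
    _ = (A * 2) * ((2 * R ^ 2) ^ n) / n.factorial := by
        rw [pow_mul, mul_pow]; ring

lemma aux_summable_deriv {A : ℝ} {c : ℕ → 𝕜} (h : ∀ n, ‖c n‖ ≤ A / n.factorial) (x : 𝕜) :
    Summable fun n => c n * ((2 * n : ℕ) * x ^ (2 * n - 1)) := by
  have hR1 : (1:ℝ) ≤ ‖x‖ + 1 := by have := norm_nonneg x; linarith
  apply Summable.of_norm_bounded (g := fun n => (A * 2) * ((2 * (‖x‖ + 1) ^ 2) ^ n) / n.factorial)
  · simpa [mul_div_assoc] using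
      (Real.summable_pow_div_factorial (2 * (‖x‖ + 1) ^ 2)).mul_left (A * 2)
  · exact fun n => aux_deriv_bound h hR1 (by linarith [norm_nonneg x]) n

lemma aux_hasDerivAt {A : ℝ} {c : ℕ → 𝕜} (h : ∀ n, ‖c n‖ ≤ A / n.factorial) (x : 𝕜) :
    HasDerivAt (fun y => ∑' n, c n * y ^ (2 * n))
      (∑' n, c n * ((2 * n : ℕ) * x ^ (2 * n - 1))) x := by
  have hR0 : (0:ℝ) < ‖x‖ + 1 := by have := norm_nonneg x; linarith
  have hR1 : (1:ℝ) ≤ ‖x‖ + 1 := by have := norm_nonneg x; linarith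
  refine hasDerivAt_tsum_of_isPreconnected
    (u := fun n => (A * 2) * ((2 * (‖x‖ + 1) ^ 2) ^ n) / n.factorial)
    (g := fun n y => c n * y ^ (2 * n))
    (g' := fun n y => c n * ((2 * n : ℕ) * y ^ (2 * n - 1)))
    (t := Metric.ball (0 : 𝕜) (‖x‖ + 1)) (y₀ := (0 : 𝕜))
    ?_ Metric.isOpen_ball (convex_ball _ _).isPreconnected ?_ ?_ ?_ ?_ ?_
  · simpa [mul_div_assoc] using
      (Real.summable_pow_div_factorial (2 * (‖x‖ + 1) ^ 2)).mul_left (A * 2)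
  · exact fun n y _ => (hasDerivAt_pow (2 * n) y).const_mul (c n)
  · exact fun n y hy => aux_deriv_bound h hR1 (mem_ball_zero_iff.mp hy).le n
  · exact Metric.mem_ball_self hR0
  · exact aux_summable h 0
  · exact mem_ball_zero_iff.mpr (by linarith [norm_nonneg x])

end auxseries

/-- coefficients of the modified spherical Bessel series -/
noncomputable def bb (l n : ℕ) : ℝ :=
  2 ^ l * (n + l).factorial / (n.factorial * (2 * (n + l) + 1).factorial)

lemma bb_pos (l n : ℕ) : 0 < bb l n := by
  unfold bb; positivity

lemma bb_zero (n : ℕ) : bb 0 n = ((2 * n + 1).factorial : ℝ)⁻¹ := by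
  unfold bb
  field_simp
  simp

lemma bb_rec (l n : ℕ) : bb (l + 1) n = 2 * (n + 1) * bb l (n + 1) := by
  unfold bb
  have h1 : n + (l + 1) = (n + 1) + l := by omega
  have h2 : (n + 1).factorial = (n + 1) * n.factorial := Nat.factorial_succ n
  rw [h1, h2]
  have h3 : ((n+1:ℕ):ℝ) ≠ 0 := by positivity
  field_simp
  push_cast
  ring

lemma bb_bound (l n : ℕ) : bb l n ≤ 2 ^ l / n.factorial := by
  unfold bb
  rw [div_le_div_iff₀ (by positivity) (by positivity)]
  have h : ((n + l).factorial : ℝ) ≤ ((2 * (n + l) + 1).factorial : ℝ) := by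
    exact_mod_cast Nat.factorial_le (by omega)
  calc (2:ℝ) ^ l * (n + l).factorial * n.factorial
      ≤ 2 ^ l * (2 * (n + l) + 1).factorial * n.factorial := by
        apply mul_le_mul_of_nonneg_right _ (by positivity)
        exact mul_le_mul_of_nonneg_left h (by positivity)
    _ = 2 ^ l * (n.factorial * (2 * (n + l) + 1).factorial) := by ring

lemma cb_bound (l : ℕ) : ∀ n : ℕ, ‖((-1:ℂ)) ^ (n + l) * (bb l n : ℂ)‖ ≤ 2 ^ l / n.factorial := by
  intro n
  rw [norm_mul, norm_pow, norm_neg, norm_one, one_pow, one_mul, Complex.norm_real,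
    Real.norm_eq_abs, abs_of_pos (bb_pos l n)]
  exact bb_bound l n

lemma sinc_eq (x : ℂ) (hx : x ≠ 0) :
    Complex.sin x / x = ∑' n : ℕ, ((-1:ℂ)) ^ (n + 0) * (bb 0 n : ℝ) * x ^ (2 * n) := by
  rw [Complex.sin_eq_tsum, ← tsum_div_const]
  refine tsum_congr fun n => ?_
  rw [bb_zero, add_zero]
  push_cast
  have hxp : x ^ (2*n+1) / x = x ^ (2*n) := by
    rw [pow_succ]; exact mul_div_cancel_right₀ _ hx
  rw [div_right_comm, mul_div_assoc, hxp]
  ring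

lemma raylD_sin (l : ℕ) : ∀ x : ℂ, x ≠ 0 →
    raylD^[l] (fun y => Complex.sin y / y) x
      = ∑' n : ℕ, ((-1:ℂ)) ^ (n + l) * (bb l n : ℝ) * x ^ (2 * n) := by
  induction l with
  | zero => exact fun x hx => sinc_eq x hx
  | succ l ih =>
    intro x hx
    rw [Function.iterate_succ_apply']
    show deriv (raylD^[l] (fun y => Complex.sin y / y)) x / x = _
    have hev : raylD^[l] (fun y => Complex.sin y / y)
        =ᶠ[nhds x] (fun y => ∑' n : ℕ, ((-1:ℂ)) ^ (n + l) * (bb l n : ℝ) * y ^ (2 * n)) := by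
      filter_upwards [IsOpen.mem_nhds isOpen_compl_singleton hx] with y hy
      exact ih y hy
    rw [hev.deriv_eq, (aux_hasDerivAt (cb_bound l) x).deriv, ← tsum_div_const]
    rw [Summable.tsum_eq_zero_add (((aux_summable_deriv (cb_bound l) x)).div_const x)]
    simp only [Nat.mul_zero, Nat.cast_zero, zero_mul, mul_zero, zero_div, zero_add]
    refine tsum_congr fun n => ?_
    have hb : (bb (l+1) n : ℂ) = 2 * (n + 1) * (bb l (n+1) : ℂ) := by
      rw [bb_rec]; push_cast; ring
    have hexp : 2 * (n + 1) - 1 = 2 * n + 1 := by omega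
    rw [hexp, hb, pow_succ]
    have hsgn : ((-1:ℂ)) ^ (n + 1 + l) = ((-1:ℂ)) ^ (n + (l + 1)) := by ring_nf
    rw [hsgn]
    field_simp
    push_cast
    ring

lemma bb_norm_bound (l : ℕ) : ∀ n : ℕ, ‖bb l n‖ ≤ (2:ℝ) ^ l / n.factorial := fun n => by
  rw [Real.norm_eq_abs, abs_of_pos (bb_pos l n)]; exact bb_bound l n

/-- the real series `∑ b_{l,n} t^{2n}` -/
noncomputable def GG (l : ℕ) (t : ℝ) : ℝ := ∑' n, bb l n * t ^ (2 * n)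

/-- its term-by-term derivative -/
noncomputable def GG' (l : ℕ) (t : ℝ) : ℝ := ∑' n, bb l n * ((2 * n : ℕ) * t ^ (2 * n - 1))

lemma GG_hasDerivAt (l : ℕ) (t : ℝ) : HasDerivAt (GG l) (GG' l t) t :=
  aux_hasDerivAt (bb_norm_bound l) t

lemma GG_nonneg (l : ℕ) {t : ℝ} (ht : 0 ≤ t) : 0 ≤ GG l t :=
  tsum_nonneg fun n => mul_nonneg (bb_pos l n).le (pow_nonneg ht _)

lemma GG_mono (l : ℕ) {t₁ t₂ : ℝ} (h0 : 0 ≤ t₁) (h : t₁ ≤ t₂) : GG l t₁ ≤ GG l t₂ := by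
  refine Summable.tsum_le_tsum (fun n => ?_) (aux_summable (bb_norm_bound l) t₁)
    (aux_summable (bb_norm_bound l) t₂)
  exact mul_le_mul_of_nonneg_left (pow_le_pow_left₀ h0 h _) (bb_pos l n).le

lemma GG'_nonneg (l : ℕ) {t : ℝ} (ht : 0 ≤ t) : 0 ≤ GG' l t :=
  tsum_nonneg fun n => mul_nonneg (bb_pos l n).le
    (mul_nonneg (Nat.cast_nonneg _) (pow_nonneg ht _))

lemma GG'_mono (l : ℕ) {t₁ t₂ : ℝ} (h0 : 0 ≤ t₁) (h : t₁ ≤ t₂) : GG' l t₁ ≤ GG' l t₂ := by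
  refine Summable.tsum_le_tsum (fun n => ?_) (aux_summable_deriv (bb_norm_bound l) t₁)
    (aux_summable_deriv (bb_norm_bound l) t₂)
  exact mul_le_mul_of_nonneg_left
    (mul_le_mul_of_nonneg_left (pow_le_pow_left₀ h0 h _) (by positivity)) (bb_pos l n).le

lemma tsum_I_eq (l : ℕ) (t : ℝ) :
    ∑' n : ℕ, ((-1:ℂ)) ^ (n + l) * (bb l n : ℝ) * (Complex.I * t) ^ (2 * n)
      = (-1) ^ l * ((GG l t : ℝ) : ℂ) := by
  unfold GG
  rw [Complex.ofReal_tsum, ← tsum_mul_left]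
  refine tsum_congr fun n => ?_
  have hI : (Complex.I * (t:ℂ)) ^ (2 * n) = (-1) ^ n * ((t:ℂ)) ^ (2 * n) := by
    rw [mul_pow, pow_mul, Complex.I_sq, pow_mul]
  rw [hI, pow_add]
  push_cast
  have h1 : ((-1:ℂ)) ^ n * ((-1:ℂ)) ^ n = 1 := by rw [← mul_pow]; norm_num
  linear_combination ((-1:ℂ)) ^ l * (bb l n : ℂ) * ((t:ℂ)) ^ (2 * n) * h1

lemma sphJ_I (l : ℕ) (t : ℝ) (ht : t ≠ 0) :
    sphJ l (Complex.I * t) = Complex.I ^ l * ((t ^ l * GG l t : ℝ) : ℂ) := by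
  unfold sphJ
  rw [raylD_sin l _ (mul_ne_zero Complex.I_ne_zero (Complex.ofReal_ne_zero.mpr ht)),
    tsum_I_eq]
  have h2 : (-(Complex.I * (t:ℂ))) * (-1) = Complex.I * t := by ring
  rw [← mul_assoc, ← mul_pow, h2, mul_pow, Complex.ofReal_mul, Complex.ofReal_pow]
  ring

lemma arg_eq (k r : ℝ) : Complex.I * (k:ℂ) * (r:ℂ) = Complex.I * ((k * r : ℝ) : ℂ) := by
  push_cast; ring

lemma normJ_eq (l : ℕ) {t : ℝ} (ht : 0 < t) :
    ‖sphJ l (Complex.I * t)‖ = t ^ l * GG l t := by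
  rw [sphJ_I l t ht.ne', norm_mul, norm_pow, Complex.norm_I, one_pow, one_mul,
    Complex.norm_real, Real.norm_eq_abs,
    _root_.abs_of_nonneg (mul_nonneg (pow_nonneg ht.le _) (GG_nonneg l ht.le))]

lemma monoJ (l : ℕ) (k : ℝ) (hk : 0 < k) :
    MonotoneOn (fun r : ℝ => ‖sphJ l (Complex.I * k * r)‖) (Set.Ioi 0) := by
  intro r₁ h₁ r₂ h₂ h12
  have h₁ : (0:ℝ) < r₁ := h₁
  have h₂ : (0:ℝ) < r₂ := h₂
  have ht₁ : 0 < k * r₁ := mul_pos hk h₁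
  have ht₂ : 0 < k * r₂ := mul_pos hk h₂
  have htle : k * r₁ ≤ k * r₂ := mul_le_mul_of_nonneg_left h12 hk.le
  simp only [arg_eq, normJ_eq l ht₁, normJ_eq l ht₂]
  exact mul_le_mul (pow_le_pow_left₀ ht₁.le htle _) (GG_mono l ht₁.le htle)
    (GG_nonneg l ht₁.le) (pow_nonneg ht₂.le _)

/-- the derivative of `t ↦ t^l * GG l t` -/
noncomputable def DD (l : ℕ) (t : ℝ) : ℝ :=
  (l : ℝ) * t ^ (l - 1) * GG l t + t ^ l * GG' l t

lemma DD_nonneg (l : ℕ) {t : ℝ} (ht : 0 ≤ t) : 0 ≤ DD l t :=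
  add_nonneg
    (mul_nonneg (mul_nonneg (Nat.cast_nonneg _) (pow_nonneg ht _)) (GG_nonneg l ht))
    (mul_nonneg (pow_nonneg ht _) (GG'_nonneg l ht))

lemma DD_mono (l : ℕ) {t₁ t₂ : ℝ} (h0 : 0 ≤ t₁) (h : t₁ ≤ t₂) : DD l t₁ ≤ DD l t₂ := by
  unfold DD
  apply add_le_add
  · exact mul_le_mul
      (mul_le_mul_of_nonneg_left (pow_le_pow_left₀ h0 h _) (Nat.cast_nonneg _))
      (GG_mono l h0 h) (GG_nonneg l h0)
      (mul_nonneg (Nat.cast_nonneg _) (pow_nonneg (h0.trans h) _))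
  · exact mul_le_mul (pow_le_pow_left₀ h0 h _) (GG'_mono l h0 h) (GG'_nonneg l h0)
      (pow_nonneg (h0.trans h) _)

lemma hasDerivAt_tG (l : ℕ) (t : ℝ) :
    HasDerivAt (fun t : ℝ => t ^ l * GG l t) (DD l t) t :=
  (hasDerivAt_pow l t).mul (GG_hasDerivAt l t)

lemma derivJ_eq (l : ℕ) (k : ℝ) (hk : 0 < k) {r : ℝ} (hr : 0 < r) :
    deriv (fun s : ℝ => sphJ l (Complex.I * k * s)) r
      = Complex.I ^ l * ((k * DD l (k * r) : ℝ) : ℂ) := by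
  have hev : (fun s : ℝ => sphJ l (Complex.I * k * s))
      =ᶠ[nhds r] (fun s : ℝ => Complex.I ^ l * (((k * s) ^ l * GG l (k * s) : ℝ) : ℂ)) := by
    filter_upwards [IsOpen.mem_nhds isOpen_Ioi hr] with s hs
    rw [arg_eq, sphJ_I l _ (mul_pos hk hs).ne']
  rw [hev.deriv_eq]
  have hinner : HasDerivAt (fun s : ℝ => k * s) (k * 1) r := (hasDerivAt_id r).const_mul k
  have h1 : HasDerivAt (fun s : ℝ => (k * s) ^ l * GG l (k * s)) (DD l (k * r) * (k * 1)) r :=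
    (hasDerivAt_tG l (k * r)).comp r hinner
  have h2 := ((h1.ofReal_comp).const_mul ((Complex.I : ℂ) ^ l)).deriv
  rw [h2]
  push_cast
  ring

lemma monoJ' (l : ℕ) (k : ℝ) (hk : 0 < k) :
    MonotoneOn (fun r : ℝ => ‖deriv (fun s : ℝ => sphJ l (Complex.I * k * s)) r‖)
      (Set.Ioi 0) := by
  intro r₁ h₁ r₂ h₂ h12
  have h₁ : (0:ℝ) < r₁ := h₁
  have h₂ : (0:ℝ) < r₂ := h₂
  have ht₁ : 0 < k * r₁ := mul_pos hk h₁
  have ht₂ : 0 < k * r₂ := mul_pos hk h₂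
  have htle : k * r₁ ≤ k * r₂ := mul_le_mul_of_nonneg_left h12 hk.le
  simp only [derivJ_eq l k hk h₁, derivJ_eq l k hk h₂, norm_mul, norm_pow, Complex.norm_I,
    one_pow, one_mul, Complex.norm_real, Real.norm_eq_abs, Complex.ofReal_mul, norm_mul]
  rw [_root_.abs_of_nonneg (DD_nonneg l ht₁.le), _root_.abs_of_nonneg (DD_nonneg l ht₂.le)]
  exact mul_le_mul_of_nonneg_left (DD_mono l ht₁.le htle) (abs_nonneg k)

/-- coefficients of the Hankel polynomial (nonnegative integers) -/
def cc : ℕ → ℕ → ℕ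
  | 0, 0 => 1
  | 0, _ + 1 => 0
  | l + 1, 0 => cc l 0
  | l + 1, m + 1 => cc l (m + 1) + (l + m + 1) * cc l m

/-- complex coefficients appearing in `D^l (e^{ix}/x)` -/
noncomputable def dd : ℕ → ℕ → ℂ
  | 0, 0 => 1
  | 0, _ + 1 => 0
  | l + 1, 0 => Complex.I * dd l 0
  | l + 1, m + 1 => Complex.I * dd l (m + 1) - (l + m + 1 : ℕ) * dd l m

lemma cc_zero (l : ℕ) : cc l 0 = 1 := by
  induction l with
  | zero => rfl
  | succ l ih => rw [cc, ih]

lemma cc_top : ∀ l m : ℕ, l < m → cc l m = 0 := by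
  intro l
  induction l with
  | zero => intro m hm; cases m with
    | zero => omega
    | succ m => rfl
  | succ l ih =>
    intro m hm
    cases m with
    | zero => omega
    | succ m => rw [cc, ih (m + 1) (by omega), ih m (by omega)]; ring

lemma dd_eq : ∀ l m : ℕ, dd l m = Complex.I ^ (l + m) * (cc l m : ℂ) := by
  intro l
  induction l with
  | zero => intro m; cases m with
    | zero => simp [dd, cc]
    | succ m => simp [dd, cc]
  | succ l ih =>
    intro m
    cases m with
    | zero =>
      show Complex.I * dd l 0 = _
      rw [ih 0, cc_zero, cc_zero]
      simp [pow_succ]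
      ring
    | succ m =>
      show Complex.I * dd l (m + 1) - ((l + m + 1 : ℕ) : ℂ) * dd l m = _
      have h2 : (Complex.I) ^ (l + 1 + (m + 1)) = -(Complex.I ^ (l + m)) := by
        have h : l + 1 + (m + 1) = (l + m) + 2 := by omega
        rw [h, pow_add, Complex.I_sq, mul_neg_one]
      have h3 : l + (m + 1) = (l + m) + 1 := by omega
      rw [ih, ih, cc, h2, h3, pow_succ]
      push_cast
      linear_combination (Complex.I ^ (l + m) * ((cc l (m + 1)) : ℂ)) * Complex.I_mul_I

lemma dd_top (l m : ℕ) (h : l < m) : dd l m = 0 := by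
  rw [dd_eq, cc_top l m h]; simp

lemma raylD_exp (l : ℕ) : ∀ x : ℂ, x ≠ 0 →
    raylD^[l] (fun y => Complex.exp (Complex.I * y) / y) x
      = Complex.exp (Complex.I * x)
        * ∑ m ∈ Finset.range (l + 1), dd l m * x ^ (-(l : ℤ) - 1 - m) := by
  induction l with
  | zero =>
    intro x hx
    simp only [Function.iterate_zero, id_eq, Finset.range_one, Finset.sum_singleton]
    show Complex.exp (Complex.I * x) / x = _
    norm_num [dd]
    rw [div_eq_mul_inv]
  | succ l ih =>
    intro x hx
    rw [Function.iterate_succ_apply']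
    show deriv (raylD^[l] (fun y => Complex.exp (Complex.I * y) / y)) x / x = _
    have hev : raylD^[l] (fun y => Complex.exp (Complex.I * y) / y)
        =ᶠ[nhds x] (fun y => Complex.exp (Complex.I * y)
          * ∑ m ∈ Finset.range (l + 1), dd l m * y ^ (-(l : ℤ) - 1 - m)) := by
      filter_upwards [IsOpen.mem_nhds isOpen_compl_singleton hx] with y hy
      exact ih y hy
    rw [hev.deriv_eq]
    have hE : HasDerivAt (fun y => Complex.exp (Complex.I * y))
        (Complex.exp (Complex.I * x) * Complex.I) x := by
      have h1 : HasDerivAt (fun y : ℂ => Complex.I * y) (Complex.I * 1) x :=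
        (hasDerivAt_id x).const_mul Complex.I
      have h2 := (Complex.hasDerivAt_exp (Complex.I * x)).comp x h1
      simpa [Function.comp_def] using h2
    have hS : HasDerivAt (fun y : ℂ => ∑ m ∈ Finset.range (l + 1), dd l m * y ^ (-(l : ℤ) - 1 - m))
        (∑ m ∈ Finset.range (l + 1),
          dd l m * (((-(l : ℤ) - 1 - m : ℤ) : ℂ) * x ^ (-(l : ℤ) - 1 - m - 1))) x :=
      HasDerivAt.fun_sum fun m _ => (hasDerivAt_zpow _ x (Or.inl hx)).const_mul (dd l m)
    rw [(hE.fun_mul hS).deriv]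
    set A := ∑ m ∈ Finset.range (l + 1), dd l m * x ^ (-(l : ℤ) - 1 - m) with hA
    set B := ∑ m ∈ Finset.range (l + 1),
      dd l m * (((-(l : ℤ) - 1 - m : ℤ) : ℂ) * x ^ (-(l : ℤ) - 1 - m - 1)) with hB
    have key : ∑ m ∈ Finset.range (l + 1 + 1),
          dd (l + 1) m * x ^ (-((l + 1 : ℕ) : ℤ) - 1 - m)
        = (Complex.I * A + B) * x⁻¹ := by
      rw [Finset.sum_range_succ']
      have hdd0 : dd (l + 1) 0 = Complex.I * dd l 0 := rfl
      have hddS : ∀ m : ℕ, dd (l + 1) (m + 1)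
          = Complex.I * dd l (m + 1) - ((l + m + 1 : ℕ) : ℂ) * dd l m := fun m => rfl
      simp only [hdd0, hddS, sub_mul]
      rw [Finset.sum_sub_distrib, sub_add_eq_add_sub,
        ← Finset.sum_range_succ' (fun m => Complex.I * dd l m * x ^ (-((l+1:ℕ):ℤ) - 1 - (m:ℤ)))
          (l + 1),
        Finset.sum_range_succ, dd_top l (l + 1) (by omega)]
      simp only [mul_zero, zero_mul, add_zero]
      rw [hA, hB, add_mul, Finset.mul_sum, Finset.sum_mul, Finset.sum_mul,
        ← Finset.sum_sub_distrib, ← Finset.sum_add_distrib]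
      refine Finset.sum_congr rfl fun m hm => ?_
      have e1 : (-((l+1:ℕ):ℤ) - 1 - (m:ℤ)) = (-(l:ℤ) - 1 - m) - 1 := by push_cast; ring
      have e2 : (-((l+1:ℕ):ℤ) - 1 - ((m+1:ℕ):ℤ)) = (-(l:ℤ) - 1 - m - 1) - 1 := by
        push_cast; ring
      rw [e1, e2]
      simp only [zpow_sub_one₀ hx]
      push_cast
      ring
    rw [key]
    push_cast
    field_simp

lemma sphH_norm (l : ℕ) {t : ℝ} (ht : 0 < t) :
    ‖sphH l (Complex.I * t)‖
      = Real.exp (-t) * ∑ m ∈ Finset.range (l + 1), (cc l m : ℝ) * t ^ (-(1:ℤ) - m) := by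
  have hIt : Complex.I * (t:ℂ) ≠ 0 :=
    mul_ne_zero Complex.I_ne_zero (Complex.ofReal_ne_zero.mpr ht.ne')
  unfold sphH
  rw [raylD_exp l _ hIt]
  have hexp : Complex.exp (Complex.I * (Complex.I * t)) = ((Real.exp (-t) : ℝ) : ℂ) := by
    rw [← mul_assoc, Complex.I_mul_I, Complex.ofReal_exp, Complex.ofReal_neg]
    norm_num
  have hsum : ∑ m ∈ Finset.range (l + 1), dd l m * (Complex.I * t) ^ (-(l:ℤ) - 1 - m)
      = (-Complex.I) *
        ((∑ m ∈ Finset.range (l + 1), (cc l m : ℝ) * t ^ (-(l:ℤ) - 1 - m) : ℝ) : ℂ) := by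
    push_cast
    rw [Finset.mul_sum]
    refine Finset.sum_congr rfl fun m hm => ?_
    rw [dd_eq, mul_zpow, ← Complex.ofReal_zpow]
    have hI1 : (Complex.I) ^ (l + m) * Complex.I ^ (-(l:ℤ) - 1 - m) = -Complex.I := by
      rw [← zpow_natCast Complex.I (l + m), ← zpow_add₀ Complex.I_ne_zero]
      have hE : ((l + m : ℕ) : ℤ) + (-(l:ℤ) - 1 - m) = -1 := by push_cast; ring
      rw [hE, zpow_neg_one, Complex.inv_I]
    calc Complex.I ^ (l + m) * (cc l m : ℂ)
          * (Complex.I ^ (-(l:ℤ) - 1 - m) * ((t : ℝ) ^ (-(l:ℤ) - 1 - m) : ℝ))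
        = (Complex.I ^ (l + m) * Complex.I ^ (-(l:ℤ) - 1 - m))
          * ((cc l m : ℂ) * ((t : ℝ) ^ (-(l:ℤ) - 1 - m) : ℝ)) := by ring
      _ = -Complex.I * ((cc l m : ℂ) * ((t : ℝ) ^ (-(l:ℤ) - 1 - m) : ℝ)) := by rw [hI1]
  rw [hexp, hsum]
  have hS_nonneg : 0 ≤ ∑ m ∈ Finset.range (l + 1), (cc l m : ℝ) * t ^ (-(l:ℤ) - 1 - m) :=
    Finset.sum_nonneg fun m _ =>
      mul_nonneg (Nat.cast_nonneg _) (zpow_pos ht _).le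
  simp only [norm_mul, norm_neg, Complex.norm_I, norm_pow, Complex.norm_real,
    Real.norm_eq_abs, one_mul]
  rw [_root_.abs_of_nonneg (Real.exp_nonneg (-t)), _root_.abs_of_nonneg hS_nonneg,
    _root_.abs_of_pos ht, Finset.mul_sum, Finset.mul_sum]
  rw [mul_comm (Real.exp (-t)) (∑ m ∈ Finset.range (l + 1), (cc l m : ℝ) * t ^ (-(1:ℤ) - m)),
    Finset.sum_mul]
  refine Finset.sum_congr rfl fun m hm => ?_
  have hz : (t:ℝ) ^ (l:ℤ) * t ^ (-(l:ℤ) - 1 - m) = t ^ (-(1:ℤ) - m) := by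
    rw [← zpow_add₀ ht.ne']; congr 1; ring
  calc t ^ l * (Real.exp (-t) * ((cc l m : ℝ) * t ^ (-(l:ℤ) - 1 - m)))
      = (cc l m : ℝ) * ((t:ℝ) ^ (l:ℤ) * t ^ (-(l:ℤ) - 1 - m)) * Real.exp (-t) := by
        rw [zpow_natCast]; ring
    _ = (cc l m : ℝ) * t ^ (-(1:ℤ) - m) * Real.exp (-t) := by rw [hz]

lemma antiH (l : ℕ) (k : ℝ) (hk : 0 < k) :
    StrictAntiOn (fun r : ℝ => ‖sphH l (Complex.I * k * r)‖) (Set.Ioi 0) := by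
  intro r₁ h₁ r₂ h₂ h12
  have h₁ : (0:ℝ) < r₁ := h₁
  have h₂ : (0:ℝ) < r₂ := h₂
  have ht₁ : 0 < k * r₁ := mul_pos hk h₁
  have ht₂ : 0 < k * r₂ := mul_pos hk h₂
  have htlt : k * r₁ < k * r₂ := by nlinarith
  simp only [arg_eq, sphH_norm l ht₁, sphH_norm l ht₂]
  have hzle : ∀ m : ℕ, (k * r₂) ^ (-(1:ℤ) - m) ≤ (k * r₁) ^ (-(1:ℤ) - m) := by
    intro m
    have hrep : ∀ t : ℝ, 0 < t → t ^ (-(1:ℤ) - m) = (t ^ (m + 1))⁻¹ := by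
      intro t ht
      rw [show -(1:ℤ) - m = -((m + 1 : ℕ) : ℤ) by push_cast; ring, zpow_neg, zpow_natCast]
    rw [hrep _ ht₁, hrep _ ht₂]
    exact inv_anti₀ (pow_pos ht₁ _) (pow_le_pow_left₀ ht₁.le htlt.le _)
  have hSle : ∑ m ∈ Finset.range (l + 1), (cc l m : ℝ) * (k * r₂) ^ (-(1:ℤ) - m)
      ≤ ∑ m ∈ Finset.range (l + 1), (cc l m : ℝ) * (k * r₁) ^ (-(1:ℤ) - m) :=
    Finset.sum_le_sum fun m _ => mul_le_mul_of_nonneg_left (hzle m) (Nat.cast_nonneg _)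
  have hSpos : 0 < ∑ m ∈ Finset.range (l + 1), (cc l m : ℝ) * (k * r₂) ^ (-(1:ℤ) - m) := by
    refine Finset.sum_pos' (fun m _ => mul_nonneg (Nat.cast_nonneg _) (zpow_pos ht₂ _).le)
      ⟨0, Finset.mem_range.mpr (by omega), ?_⟩
    rw [cc_zero]
    push_cast
    rw [one_mul]
    exact zpow_pos ht₂ _
  calc Real.exp (-(k * r₂)) * ∑ m ∈ Finset.range (l + 1), (cc l m : ℝ) * (k * r₂) ^ (-(1:ℤ) - m)
      < Real.exp (-(k * r₁)) * ∑ m ∈ Finset.range (l + 1),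
          (cc l m : ℝ) * (k * r₂) ^ (-(1:ℤ) - m) := by
        exact mul_lt_mul_of_pos_right (Real.exp_lt_exp.mpr (by linarith)) hSpos
    _ ≤ Real.exp (-(k * r₁)) * ∑ m ∈ Finset.range (l + 1),
          (cc l m : ℝ) * (k * r₁) ^ (-(1:ℤ) - m) :=
        mul_le_mul_of_nonneg_left hSle (Real.exp_nonneg _)

/-- `r ↦ |j_ℓ(ikr)|` and `r ↦ |d/dr j_ℓ(ikr)|` are nondecreasing on
`(0, ∞)`, and `r ↦ |h_ℓ(ikr)|` is strictly decreasing on `(0, ∞)`. -/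
theorem stmt_7 (l : ℕ) (k : ℝ) (hk : 0 < k) :
    MonotoneOn (fun r : ℝ => ‖sphJ l (Complex.I * k * r)‖) (Ioi 0) ∧
    MonotoneOn (fun r : ℝ => ‖deriv (fun s : ℝ => sphJ l (Complex.I * k * s)) r‖) (Ioi 0) ∧
    StrictAntiOn (fun r : ℝ => ‖sphH l (Complex.I * k * r)‖) (Ioi 0) :=
  ⟨monoJ l k hk, monoJ' l k hk, antiH l k hk⟩
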